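/- Let A be a left brace of cardinality p^n for a prime p > 5 and a natural number n, satisfying Property 1. Then: (i) e'_{(p−3)/2}(a, b) ∈ p·A for all a, b ∈ A; (ii) e'_{(p−3)/2}(a, b) = 0 for all a ∈ A and b ∈ ann(p); and (iii) for every function ρ : p·A → A with p·ρ(x) = x for all x ∈ p·A, and for all a ∈ A, b ∈ p·A: e'_{(p−1)/2}(a, ρ(b)) = e'_{(p−3)/2}(a, ρ(a * b)). -/

import Mathlib

/-- A left brace: `(A, +)` abelian group, `(A, ∘)` a group (with identity `cone`
and inverse `cinv`), satisfying `a ∘ (b + c) + a = a ∘ b + a ∘ c`. -/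
class LeftBrace (A : Type*) extends AddCommGroup A where
  circ : A → A → A
  cone : A
  cinv : A → A
  circ_assoc : ∀ a b c : A, circ (circ a b) c = circ a (circ b c)
  circ_cone : ∀ a : A, circ a cone = a
  cone_circ : ∀ a : A, circ cone a = a
  circ_cinv : ∀ a : A, circ a (cinv a) = cone
  cinv_circ : ∀ a : A, circ (cinv a) a = cone
  circ_add : ∀ a b c : A, circ a (b + c) + a = circ a b + circ a c

namespace LeftBrace

variable {A : Type*} [LeftBrace A]

/-- The brace operation `a * b = a ∘ b - a - b`. -/
def bstar (a b : A) : A := circ a b - a - b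

/-- `ann (p^i) = {a : p^i • a = 0}`. -/
def ann (p i : ℕ) : Set A := {a : A | (p ^ i : ℕ) • a = 0}

/-- `p^i • A = {p^i • a : a ∈ A}`. -/
def pA (p i : ℕ) : Set A := Set.range (fun a : A => (p ^ i : ℕ) • a)

/-- An ideal of a left brace: an additive subgroup closed under `*` on both sides. -/
def IsIdeal (I : Set A) : Prop :=
  (0 : A) ∈ I ∧ (∀ x ∈ I, ∀ y ∈ I, x + y ∈ I) ∧ (∀ x ∈ I, -x ∈ I) ∧
  (∀ a : A, ∀ x ∈ I, bstar a x ∈ I) ∧ (∀ a : A, ∀ x ∈ I, bstar x a ∈ I)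

/-- `eIter a b m = e'_m(a,b)` for `m ≥ 1`, with `eIter a b 0 = b`;
so `e'_1(a,b) = a * b` and `e'_{m+1}(a,b) = a * e'_m(a,b)`. -/
def eIter (a b : A) : ℕ → A
  | 0 => b
  | m + 1 => bstar a (eIter a b m)

/-- `circPow a j = a^{∘ j}`, the `j`-fold `∘`-product of `a` with itself. -/
def circPow (a : A) : ℕ → A
  | 0 => cone
  | j + 1 => circ a (circPow a j)

/-- Property 1 (with `c = ⌊(p-1)/4⌋`). -/
def Property1 (p : ℕ) (A : Type*) [LeftBrace A] : Prop :=
  (∀ a b : A, eIter a b ((p - 1) / 4) ∈ pA p 1) ∧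
  (∀ i : ℕ, 1 ≤ i → ∀ a : A, ∀ b ∈ ann p i, eIter a b ((p - 1) / 4) ∈ ann p (i - 1))

end LeftBrace

open LeftBrace

section Aux

variable {A : Type*} [LeftBrace A]

lemma bstar_add (a x y : A) : bstar a (x + y) = bstar a x + bstar a y := by
  have h := LeftBrace.circ_add a x y
  unfold bstar
  have : circ a (x + y) = circ a x + circ a y - a := by
    rw [← h]; abel
  rw [this]; abel

/-- `bstar a` as an additive monoid hom. -/
def bstarHom (a : A) : A →+ A := AddMonoidHom.mk' (bstar a) (bstar_add a)

lemma bstar_zero (a : A) : bstar a (0 : A) = 0 := (bstarHom a).map_zero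

lemma bstar_nsmul (a : A) (k : ℕ) (x : A) : bstar a (k • x) = k • bstar a x :=
  (bstarHom a).map_nsmul k x

lemma bstar_sub (a x y : A) : bstar a (x - y) = bstar a x - bstar a y :=
  (bstarHom a).map_sub x y

lemma eIter_add (a x y : A) (m : ℕ) :
    eIter a (x + y) m = eIter a x m + eIter a y m := by
  induction m with
  | zero => rfl
  | succ m ih => simp [eIter, ih, bstar_add]

lemma eIter_zero (a : A) (m : ℕ) : eIter a (0 : A) m = 0 := by
  induction m with
  | zero => rfl
  | succ m ih => simp [eIter, ih, bstar_zero]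

lemma eIter_sub (a x y : A) (m : ℕ) :
    eIter a (x - y) m = eIter a x m - eIter a y m := by
  induction m with
  | zero => rfl
  | succ m ih => simp [eIter, ih, bstar_sub]

lemma eIter_nsmul (a : A) (k : ℕ) (x : A) (m : ℕ) :
    eIter a (k • x) m = k • eIter a x m := by
  induction m with
  | zero => rfl
  | succ m ih => simp [eIter, ih, bstar_nsmul]

lemma eIter_add_eq (a b : A) (m k : ℕ) :
    eIter a b (m + k) = eIter a (eIter a b k) m := by
  induction m with
  | zero => rw [Nat.zero_add]; rfl
  | succ m ih =>
    have : m + 1 + k = (m + k) + 1 := by omega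
    rw [this]
    show bstar a (eIter a b (m + k)) = _
    rw [ih]
    rfl

lemma eIter_succ' (a b : A) (m : ℕ) :
    eIter a b (m + 1) = eIter a (bstar a b) m := by
  rw [eIter_add_eq]
  rfl

end Aux

theorem statement9 {A : Type*} [LeftBrace A] [Fintype A] (p n : ℕ) (hp : p.Prime)
    (hp5 : 5 < p) (hcard : Fintype.card A = p ^ n) (hP1 : Property1 p A) :
    (∀ a b : A, eIter a b ((p - 3) / 2) ∈ pA p 1) ∧
    (∀ a : A, ∀ b ∈ ann p 1, eIter a b ((p - 3) / 2) = 0) ∧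
    (∀ ρ : A → A, (∀ x : A, x ∈ pA p 1 → p • ρ x = x) →
      ∀ a : A, ∀ b ∈ pA p 1,
        eIter a (ρ b) ((p - 1) / 2) = eIter a (ρ (bstar a b)) ((p - 3) / 2)) := by
  have hodd : p % 2 = 1 := Nat.odd_iff.mp (hp.odd_of_ne_two (by omega))
  set c := (p - 1) / 4 with hc
  set d := (p - 3) / 2 - c with hd
  have hdc : (p - 3) / 2 = d + c := by omega
  -- (ii) first
  have part2 : ∀ a : A, ∀ b ∈ ann p 1, eIter a b ((p - 3) / 2) = 0 := by
    intro a b hb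
    have h := hP1.2 1 le_rfl a b hb
    have h0 : eIter a b c = 0 := by
      simpa [ann] using h
    rw [hdc, eIter_add_eq, h0, eIter_zero]
  refine ⟨?_, part2, ?_⟩
  · intro a b
    obtain ⟨x, hx⟩ := hP1.1 a b
    rw [hdc, eIter_add_eq, ← hx, eIter_nsmul]
    exact ⟨eIter a x d, rfl⟩
  · intro ρ hρ a b hb
    have h12 : (p - 1) / 2 = (p - 3) / 2 + 1 := by omega
    rw [h12, eIter_succ']
    have hab : bstar a b ∈ pA p 1 := by
      obtain ⟨z, hz⟩ := hb
      exact ⟨bstar a z, by rw [← hz, bstar_nsmul]⟩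
    have hmem : bstar a (ρ b) - ρ (bstar a b) ∈ ann p 1 := by
      have h1 : (p ^ 1 : ℕ) • bstar a (ρ b) = bstar a b := by
        rw [pow_one, ← bstar_nsmul, hρ b hb]
      have h2 : (p ^ 1 : ℕ) • ρ (bstar a b) = bstar a b := by
        rw [pow_one]; exact hρ _ hab
      show (p ^ 1 : ℕ) • (bstar a (ρ b) - ρ (bstar a b)) = 0
      rw [smul_sub, h1, h2, sub_self]
    have := part2 a _ hmem
    rw [eIter_sub] at this
    exact sub_eq_zero.mp this
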